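/- Let 1 ≤ l ≤ n−1 and, for I ⊆ [1, n−1], set α(I) = c_{I ∩ [1,l−1]} · c_{[l,n−1] ∖ I} · σ_{[l,n]} · a_l. Then ℓ(t α(I)) > ℓ(α(I)) if and only if [1, l−1] is properly contained in I. Equivalently, α(I)^{−1}(1) > 0 if and only if [1, l−1] ⊊ I. -/

import Mathlib

/-!
Common setup: the Weyl group `W n` of type `B_n`, realized as the group of
permutations `w` of `I_n = {±1, …, ±n}` (inside `Equiv.Perm ℤ`, fixing every
integer of absolute value `> n`) such that `w (-i) = - w i` for all `i`.
-/

namespace TypeB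

/-- The generator `t = (1, -1)`. -/
def t : Equiv.Perm ℤ := Equiv.swap 1 (-1)

/-- The generator `s i = (i, i+1)(-i, -(i+1))` (meaningful for `1 ≤ i`). -/
def s (i : ℕ) : Equiv.Perm ℤ :=
  Equiv.swap (i : ℤ) ((i : ℤ) + 1) * Equiv.swap (-(i : ℤ)) (-((i : ℤ) + 1))

/-- The generating set `S_n = {t, s_1, …, s_{n-1}}`. -/
def gens (n : ℕ) : Set (Equiv.Perm ℤ) :=
  {t} ∪ {x | ∃ i : ℕ, 1 ≤ i ∧ i < n ∧ x = s i}

/-- The Weyl group `W_n` of type `B_n`, as a subgroup of `Equiv.Perm ℤ`: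
permutations `w` with `w (-i) = - (w i)` for all `i` and fixing all `i` with `|i| > n`. -/
def W (n : ℕ) : Subgroup (Equiv.Perm ℤ) where
  carrier := {w | (∀ i : ℤ, w (-i) = - w i) ∧ ∀ i : ℤ, (n : ℤ) < |i| → w i = i}
  one_mem' := ⟨fun _ => rfl, fun _ _ => rfl⟩
  mul_mem' := by
    rintro u v ⟨hu1, hu2⟩ ⟨hv1, hv2⟩
    refine ⟨fun i => ?_, fun i hi => ?_⟩
    · simp only [Equiv.Perm.mul_apply, hv1, hu1]
    · simp only [Equiv.Perm.mul_apply, hv2 i hi, hu2 i hi]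
  inv_mem' := by
    rintro u ⟨hu1, hu2⟩
    refine ⟨fun i => ?_, fun i hi => ?_⟩
    · apply u.injective
      simp [hu1]
    · apply u.injective
      simp [hu2 i hi]

/-- The length of `w` with respect to the generating set `S_n`. -/
noncomputable def len (n : ℕ) (w : Equiv.Perm ℤ) : ℕ :=
  sInf {k | ∃ l : List (Equiv.Perm ℤ), (∀ x ∈ l, x ∈ gens n) ∧ l.prod = w ∧ l.length = k}

/-- `l` is a reduced expression for `w` with respect to `S_n`. -/
def IsReduced (n : ℕ) (w : Equiv.Perm ℤ) (l : List (Equiv.Perm ℤ)) : Prop :=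
  (∀ x ∈ l, x ∈ gens n) ∧ l.prod = w ∧ l.length = len n w

/-- `ℓ_t w`: the number of occurrences of `t` in a reduced expression of `w`
(independent of the chosen reduced expression). -/
noncomputable def lent (n : ℕ) (w : Equiv.Perm ℤ) : ℕ :=
  letI : DecidableEq (Equiv.Perm ℤ) := Classical.decEq _
  sInf {m | ∃ l, IsReduced n w l ∧ l.count t = m}

/-- `r 1 = t` and `r (i+1) = s i * r i`. -/
def r : ℕ → Equiv.Perm ℤ
  | 0 => 1
  | 1 => t
  | (i + 2) => s (i + 1) * r (i + 1)

/-- `t_1 = t` and `t_{i+1} = s_i * t_i * s_i`. -/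
def tperm : ℕ → Equiv.Perm ℤ
  | 0 => 1
  | 1 => t
  | (i + 2) => s (i + 1) * tperm (i + 1) * s (i + 1)

/-- `a l = r 1 * r 2 * ⋯ * r l`, with `a 0 = 1`. -/
def a : ℕ → Equiv.Perm ℤ
  | 0 => 1
  | (l + 1) => a l * r (l + 1)

/-- The symmetric group `𝔖_n`: the subgroup generated by `s_1, …, s_{n-1}`. -/
def Sym (n : ℕ) : Subgroup (Equiv.Perm ℤ) :=
  Subgroup.closure {x | ∃ i : ℕ, 1 ≤ i ∧ i < n ∧ x = s i}

/-- The parabolic subgroup `𝔖_{l,n-l}`: generated by `{s_1, …, s_{n-1}} \ {s_l}`. -/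
def SymP (n l : ℕ) : Subgroup (Equiv.Perm ℤ) :=
  Subgroup.closure {x | ∃ i : ℕ, 1 ≤ i ∧ i < n ∧ i ≠ l ∧ x = s i}

/-- `Y_{l,n-l}`: elements of `𝔖_n` of minimal length in their coset `w 𝔖_{l,n-l}`. -/
def Y (n l : ℕ) : Set (Equiv.Perm ℤ) :=
  {w | w ∈ Sym n ∧ ∀ u ∈ SymP n l, len n w ≤ len n (w * u)}

/-- The subgroup `𝔖_{[i,j]}` generated by `s_i, …, s_{j-1}`. -/
def SymI (i j : ℕ) : Subgroup (Equiv.Perm ℤ) :=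
  Subgroup.closure {x | ∃ k : ℕ, i ≤ k ∧ k < j ∧ x = s k}

/-- The function reversing the interval `[i,j]` (and `[-j,-i]`), for `1 ≤ i`. -/
def revFun (i j : ℤ) : ℤ → ℤ := fun k =>
  if 1 ≤ i ∧ i ≤ k ∧ k ≤ j then i + j - k
  else if 1 ≤ i ∧ -j ≤ k ∧ k ≤ -i then -(i + j) - k
  else k

lemma revFun_involutive (i j : ℤ) : Function.Involutive (revFun i j) := by
  intro k
  unfold revFun
  split_ifs <;> omega

/-- `σ_{[i,j]}`: the longest element of `𝔖_{[i,j]}`, i.e. the order-reversing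
permutation of the interval `[i,j]` (extended to `I_n` by `w(-k) = -w(k)`). -/
def sigmaI (i j : ℕ) : Equiv.Perm ℤ := (revFun_involutive (i : ℤ) (j : ℤ)).toPerm

/-- `σ_{l,n-l}`: the longest element of `𝔖_{l,n-l} = 𝔖_{[1,l]} × 𝔖_{[l+1,n]}`. -/
def sigmaLL (n l : ℕ) : Equiv.Perm ℤ := sigmaI 1 l * sigmaI (l + 1) n

/-- The function negating all `k` with `|k| ≤ n`. -/
def negnFun (n : ℤ) : ℤ → ℤ := fun k => if -n ≤ k ∧ k ≤ n then -k else k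

lemma negnFun_involutive (n : ℤ) : Function.Involutive (negnFun n) := by
  intro k
  unfold negnFun
  split_ifs <;> omega

/-- `w_n`: the longest element of `W_n`; as a permutation, `w_n i = -i` for `|i| ≤ n`. -/
def wlong (n : ℕ) : Equiv.Perm ℤ := (negnFun_involutive (n : ℤ)).toPerm

/-- `c_I = s_{i_1} s_{i_2} ⋯ s_{i_k}` for `I = {i_1 < i_2 < ⋯ < i_k}`. -/
def cElt (I : Finset ℕ) : Equiv.Perm ℤ := ((I.sort (· ≤ ·)).map s).prod

/-- `d_I = s_{i_k} ⋯ s_{i_2} s_{i_1}` for `I = {i_1 < i_2 < ⋯ < i_k}`. -/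
def dElt (I : Finset ℕ) : Equiv.Perm ℤ := (((I.sort (· ≤ ·)).map s).reverse).prod

/-- `X_n^{(m)}`: elements of `W_n` of minimal length in their coset `w W_m`. -/
def X (n m : ℕ) : Set (Equiv.Perm ℤ) :=
  {w | w ∈ W n ∧ ∀ u ∈ W m, len n w ≤ len n (w * u)}

/-- Bruhat order: `x ≤ y` iff some reduced expression of `y` contains a subword
which is a reduced expression of `x`. -/
def BruhatLE (n : ℕ) (x y : Equiv.Perm ℤ) : Prop :=
  ∃ ly, IsReduced n y ly ∧ ∃ lx, lx.Sublist ly ∧ IsReduced n x lx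

/-- Strict Bruhat order. -/
def BruhatLT (n : ℕ) (x y : Equiv.Perm ℤ) : Prop := BruhatLE n x y ∧ x ≠ y

/-- `D_i(W_n)`: the set of `x` such that exactly one of `s_i, s_{i+1}` is a
(right) descent of `x`. -/
def Dset (n i : ℕ) : Set (Equiv.Perm ℤ) :=
  {x | Xor' (len n (x * s i) < len n x) (len n (x * s (i + 1)) < len n x)}

open Classical in
/-- `γ_i x`: the unique element of `{x s_i, x s_{i+1}} ∩ D_i(W_n)` (for `x ∈ D_i(W_n)`). -/
noncomputable def gamma (n i : ℕ) (x : Equiv.Perm ℤ) : Equiv.Perm ℤ :=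
  if x * s i ∈ Dset n i then x * s i else x * s (i + 1)

/-- `E_m^{(r)}`: the set of `w ∈ W_m` such that `|w 1| > |w i|` for `2 ≤ i ≤ r+2`
and `(w 2, …, w (r+2))` is a shuffle of a positive decreasing sequence and a
negative increasing sequence. -/
def E (m ρ : ℕ) : Set (Equiv.Perm ℤ) :=
  {w | w ∈ W m ∧ (∀ i : ℕ, 2 ≤ i → i ≤ ρ + 2 → |w (i : ℤ)| < |w (1 : ℤ)|) ∧
    ∀ i j : ℕ, 2 ≤ i → i < j → j ≤ ρ + 2 →
      (0 < w (i : ℤ) → 0 < w (j : ℤ) → w (j : ℤ) < w (i : ℤ)) ∧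
      (w (i : ℤ) < 0 → w (j : ℤ) < 0 → w (i : ℤ) < w (j : ℤ))}

/-- The product `r_{i_1} ⋯ r_{i_l}` for a sequence `i : Fin l → ℕ`. -/
def prodR {l : ℕ} (i : Fin l → ℕ) : Equiv.Perm ℤ := (List.ofFn fun k => r (i k)).prod

/-- `(l, α, β, σ)` is a decomposition of `w` as in the decomposition lemma:
`l ≤ n`, `α, β ∈ Y_{l,n-l}`, `σ ∈ 𝔖_{l,n-l}` and `w = α a_l σ β⁻¹`. -/
def IsDecomp (n : ℕ) (w : Equiv.Perm ℤ) (l : ℕ) (α β σ : Equiv.Perm ℤ) : Prop :=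
  l ≤ n ∧ α ∈ Y n l ∧ β ∈ Y n l ∧ σ ∈ SymP n l ∧ w = α * a l * σ * β⁻¹

/-!
The length of `w ∈ W n` is its number of inversions, the positive roots it sends to negative
ones: each generator changes this count by exactly one, and every `w ≠ 1` has a generator that
lowers it. Multiplying `w` on the left by `t` changes the inversion status of exactly one positive
root, namely `e_q` with `w q = ±1`, `q > 0`; hence `ℓ(t w) > ℓ(w)` iff `w⁻¹(1) > 0`.

It remains to locate `α(I)⁻¹(1)`. For `K ⊆ [b, ∞)`, the product `c_K` sends the first `e ≥ b`
missing from `K` to `b`, along `s_b ⋯ s_{e-1}`. If `[1, l-1] ⊄ I`, this first gap `e < l` of `I`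
gives `α(I)(e - l - 1) = 1`. Otherwise `c_{I ∩ [1,l-1]}` sends `l` to `1`, and
`c_{[l,n-1] ∖ I}` sends to `l` the least `e ≥ l` lying in `I ∪ {n}`; then `α(I)(l + n - e) = 1`,
and `l + n - e > 0` exactly when `I` meets `[l, n-1]`.
-/

open Finset

lemma t_apply (x : ℤ) : t x = if x = 1 then -1 else if x = -1 then 1 else x :=
  Equiv.swap_apply_def _ _ _

lemma s_apply {i : ℕ} (hi : 1 ≤ i) (x : ℤ) :
    s i x = if x = i then (i : ℤ) + 1 else if x = (i : ℤ) + 1 then (i : ℤ)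
      else if x = -(i : ℤ) then -((i : ℤ) + 1) else if x = -((i : ℤ) + 1) then -(i : ℤ) else x := by
  simp only [s, Equiv.Perm.mul_apply, Equiv.swap_apply_def]
  split_ifs <;> omega

lemma t_apply_one : t 1 = -1 := Equiv.swap_apply_left _ _

lemma s_apply_self {i : ℕ} (hi : 1 ≤ i) : s i i = i + 1 := by
  rw [s_apply hi, if_pos rfl]

lemma s_apply_add_one {i : ℕ} (hi : 1 ≤ i) : s i (i + 1) = i := by
  rw [s_apply hi, if_neg (by omega), if_pos rfl]

lemma t_mul_self : t * t = 1 := Equiv.swap_mul_self _ _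

lemma s_mul_self {i : ℕ} (hi : 1 ≤ i) : s i * s i = 1 := by
  ext x
  simp only [Equiv.Perm.mul_apply, Equiv.Perm.one_apply, s_apply hi]
  split_ifs <;> omega

lemma mul_self_of_mem_gens {n : ℕ} {g : Equiv.Perm ℤ} (hg : g ∈ gens n) : g * g = 1 := by
  rcases hg with rfl | ⟨i, hi, -, rfl⟩
  · exact t_mul_self
  · exact s_mul_self hi

namespace W

variable {n : ℕ} {w : Equiv.Perm ℤ}

lemma apply_neg (hw : w ∈ W n) (x : ℤ) : w (-x) = -w x := hw.1 x

lemma apply_zero (hw : w ∈ W n) : w 0 = 0 := by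
  have := W.apply_neg hw 0
  rw [neg_zero] at this
  omega

lemma apply_eq_zero_iff (hw : w ∈ W n) {x : ℤ} : w x = 0 ↔ x = 0 :=
  ⟨fun h => w.injective (h.trans (W.apply_zero hw).symm), fun h => h ▸ W.apply_zero hw⟩

lemma abs_apply_le (hw : w ∈ W n) {x : ℤ} (hx : |x| ≤ n) : |w x| ≤ n := by
  by_contra! h
  rw [w.injective (hw.2 _ h)] at h
  exact h.not_ge hx

lemma one_le_of_apply_one_ne (hw : w ∈ W n) (h : w 1 ≠ 1) : 1 ≤ n := by
  by_contra! hn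
  exact h (hw.2 1 (by rw [abs_one]; omega))

lemma eq_one_of_forall_apply_eq (hw : w ∈ W n) (h : ∀ k : ℕ, 1 ≤ k → k ≤ n → w k = k) :
    w = 1 := by
  have hnat : ∀ k : ℕ, w k = k := by
    intro k
    rcases Nat.eq_zero_or_pos k with rfl | hk
    · exact W.apply_zero hw
    by_cases hkn : k ≤ n
    · exact h k hk hkn
    · exact hw.2 _ (by rw [Nat.abs_cast]; omega)
  ext x
  obtain ⟨k, rfl | rfl⟩ := Int.eq_nat_or_neg x
  · exact hnat k
  · rw [W.apply_neg hw, hnat, Equiv.Perm.one_apply]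

end W

lemma t_mem_W {n : ℕ} (hn : 1 ≤ n) : t ∈ W n := by
  refine ⟨fun x => ?_, fun x hx => ?_⟩
  · simp only [t_apply]
    split_ifs <;> omega
  · rw [lt_abs] at hx
    rw [t_apply]
    split_ifs <;> omega

lemma s_mem_W {n i : ℕ} (hi : 1 ≤ i) (hin : i < n) : s i ∈ W n := by
  refine ⟨fun x => ?_, fun x hx => ?_⟩
  · simp only [s_apply hi]
    split_ifs <;> omega
  · rw [lt_abs] at hx
    rw [s_apply hi]
    split_ifs <;> omega

lemma mem_W_of_mem_gens {n : ℕ} (hn : 1 ≤ n) {g : Equiv.Perm ℤ} (hg : g ∈ gens n) : g ∈ W n := by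
  rcases hg with rfl | ⟨i, hi, hin, rfl⟩
  · exact t_mem_W hn
  · exact s_mem_W hi hin

/-- Pairs `(p, q)` with `|p| < q ≤ n`; they encode the positive roots `e_q - e_p` of type `B_n`,
where `e_{-p} = -e_p` and `e_0 = 0`. -/
noncomputable def posRoots (n : ℕ) : Finset (ℤ × ℤ) :=
  {x ∈ Icc (-(n : ℤ)) n ×ˢ Icc 1 (n : ℤ) | -x.2 < x.1 ∧ x.1 < x.2}

lemma mem_posRoots {n : ℕ} {x : ℤ × ℤ} :
    x ∈ posRoots n ↔ -x.2 < x.1 ∧ x.1 < x.2 ∧ x.2 ≤ n := by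
  simp only [posRoots, mem_filter, mem_product, mem_Icc]
  omega

noncomputable def invCount (n : ℕ) (w : Equiv.Perm ℤ) : ℕ := #{x ∈ posRoots n | w x.2 < w x.1}

lemma invCount_one (n : ℕ) : invCount n 1 = 0 := by
  rw [invCount, card_eq_zero, filter_eq_empty_iff]
  intro x hx
  rw [mem_posRoots] at hx
  simp only [Equiv.Perm.one_apply]
  omega

lemma invCount_add_one_of_involution {n : ℕ} {u v : Equiv.Perm ℤ} {ρ : ℤ × ℤ}
    (τ : ℤ × ℤ → ℤ × ℤ) (hρ : ρ ∈ posRoots n) (hu : ¬u ρ.2 < u ρ.1) (hv : v ρ.2 < v ρ.1)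
    (hτ : ∀ x ∈ (posRoots n).erase ρ, τ x ∈ (posRoots n).erase ρ)
    (hττ : ∀ x ∈ (posRoots n).erase ρ, τ (τ x) = x)
    (huv : ∀ x ∈ (posRoots n).erase ρ, u x.2 < u x.1 ↔ v (τ x).2 < v (τ x).1) :
    invCount n u + 1 = invCount n v := by
  have hcard : #{x ∈ (posRoots n).erase ρ | u x.2 < u x.1} =
      #{x ∈ (posRoots n).erase ρ | v x.2 < v x.1} := by
    refine card_nbij' τ τ (fun x hx => ?_) (fun x hx => ?_) (fun x hx => ?_) (fun x hx => ?_)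
    all_goals simp only [coe_filter, Set.mem_ofPred_eq] at hx
    · exact mem_filter.2 ⟨hτ x hx.1, (huv x hx.1).1 hx.2⟩
    · refine mem_filter.2 ⟨hτ x hx.1, (huv _ (hτ x hx.1)).2 ?_⟩
      rw [hττ x hx.1]
      exact hx.2
    · exact hττ x hx.1
    · exact hττ x hx.1
  have hvρ : ρ ∈ {x ∈ posRoots n | v x.2 < v x.1} := mem_filter.2 ⟨hρ, hv⟩
  have huρ : ρ ∉ {x ∈ posRoots n | u x.2 < u x.1} := fun h => hu (mem_filter.1 h).2
  rw [filter_erase, filter_erase, card_erase_of_mem hvρ, erase_eq_of_notMem huρ] at hcard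
  have := card_pos.2 ⟨ρ, hvρ⟩
  unfold invCount
  omega

lemma invCount_mul_t_add_one {n : ℕ} {w : Equiv.Perm ℤ} (hw : w ∈ W n) (h : w 1 < 0) :
    invCount n (w * t) + 1 = invCount n w := by
  have hn := W.one_le_of_apply_one_ne hw (by omega)
  have h0 := W.apply_zero hw
  have hneg := W.apply_neg hw 1
  refine invCount_add_one_of_involution (ρ := (0, 1)) (fun x => (t x.1, x.2))
    (mem_posRoots.2 (by simp only; omega)) ?_ (by simp only; omega) (fun x hx => ?_)
    (fun x _ => by simp only [← Equiv.Perm.mul_apply, t_mul_self, Equiv.Perm.one_apply])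
    (fun x hx => ?_)
  · simp only [Equiv.Perm.mul_apply, t_apply_one, W.apply_zero (t_mem_W hn)]
    omega
  · rw [mem_erase, Ne, Prod.ext_iff, mem_posRoots] at hx ⊢
    simp only [t_apply]
    split_ifs <;> omega
  · rw [mem_erase, Ne, Prod.ext_iff, mem_posRoots] at hx
    have : t x.2 = x.2 := by rw [t_apply]; split_ifs <;> omega
    simp only [Equiv.Perm.mul_apply, this]

lemma invCount_mul_s_add_one {n i : ℕ} (hi : 1 ≤ i) (hin : i < n) {w : Equiv.Perm ℤ}
    (hw : w ∈ W n) (h : w (i + 1) < w i) : invCount n (w * s i) + 1 = invCount n w := by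
  have hss : ∀ x, s i (s i x) = x := fun x => by
    rw [← Equiv.Perm.mul_apply, s_mul_self hi, Equiv.Perm.one_apply]
  -- `(-i, i + 1)` is fixed: `s i` sends it to `(-(i + 1), i)`, another name for `e_i + e_{i+1}`
  let τ : ℤ × ℤ → ℤ × ℤ := fun x => if x = (-(i : ℤ), (i : ℤ) + 1) then x else (s i x.1, s i x.2)
  refine invCount_add_one_of_involution (ρ := ((i : ℤ), (i : ℤ) + 1)) τ
    (mem_posRoots.2 (by simp only; omega)) ?_ h (fun x hx => ?_) (fun x hx => ?_) (fun x hx => ?_)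
  · simp only [Equiv.Perm.mul_apply, s_apply_self hi, s_apply_add_one hi]
    exact h.le.not_gt
  all_goals by_cases hx' : x = (-(i : ℤ), (i : ℤ) + 1)
  · simpa only [τ, if_pos hx'] using hx
  · simp only [τ, if_neg hx']
    rw [mem_erase, Ne, Prod.ext_iff, mem_posRoots] at hx ⊢
    rw [Prod.ext_iff] at hx'
    simp only [s_apply hi]
    split_ifs <;> omega
  · simp only [τ, if_pos hx']
  · have hτx : (s i x.1, s i x.2) ≠ (-(i : ℤ), (i : ℤ) + 1) := by
      rw [mem_erase, Ne, Prod.ext_iff, mem_posRoots] at hx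
      rw [Ne, Prod.ext_iff] at *
      simp only [s_apply hi]
      split_ifs <;> omega
    simp only [τ, if_neg hx', if_neg hτx, hss]
  · simp only [τ, hx', if_true, Equiv.Perm.mul_apply, W.apply_neg (s_mem_W hi hin), s_apply_self hi,
      s_apply_add_one hi, W.apply_neg hw]
    omega
  · simp only [τ, if_neg hx', Equiv.Perm.mul_apply]

lemma invCount_t_mul_add_one {n : ℕ} {w : Equiv.Perm ℤ} (hw : w ∈ W n) (h : w⁻¹ 1 < 0) :
    invCount n (t * w) + 1 = invCount n w := by
  have hw' := (W n).inv_mem hw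
  set q := -w⁻¹ 1 with hq
  have hn : 1 ≤ n := W.one_le_of_apply_one_ne hw' (by omega)
  have hqn : q ≤ n := by
    have := W.abs_apply_le hw' (x := 1) (by rw [abs_one]; exact_mod_cast hn)
    rw [abs_le] at this
    omega
  have hwq : ∀ y, w y = -1 ↔ y = q := fun y => by
    rw [hq, ← W.apply_neg hw', Equiv.Perm.eq_inv_iff_eq]
  have hwq' : ∀ y, w y = 1 ↔ y = -q := fun y => by
    rw [hq, neg_neg, Equiv.Perm.eq_inv_iff_eq]
  have hw0 := W.apply_zero hw
  refine invCount_add_one_of_involution (ρ := (0, q)) id (mem_posRoots.2 (by simp only; omega))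
    ?_ ?_ (fun x hx => hx) (fun x _ => rfl) (fun x hx => ?_)
  · simp only [Equiv.Perm.mul_apply, (hwq q).2 rfl, hw0, t_apply]
    norm_num
  · simp only [(hwq q).2 rfl, hw0]
    norm_num
  · rw [mem_erase, Ne, Prod.ext_iff, mem_posRoots] at hx
    have hne : w x.1 ≠ w x.2 := fun h => by have := w.injective h; omega
    have hne' : w x.1 ≠ -w x.2 := fun h => by
      rw [← W.apply_neg hw] at h
      have := w.injective h
      omega
    have h1 := hwq x.1
    have h1' := hwq' x.1
    have h2 := hwq x.2
    have h2' := hwq' x.2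
    have h0 := (W.apply_eq_zero_iff hw (x := x.1))
    have h0' := (W.apply_eq_zero_iff hw (x := x.2))
    simp only [id, Equiv.Perm.mul_apply, t_apply]
    split_ifs <;> omega

lemma invCount_mul_gens {n : ℕ} {w g : Equiv.Perm ℤ} (hn : 1 ≤ n) (hw : w ∈ W n)
    (hg : g ∈ gens n) :
    invCount n (w * g) + 1 = invCount n w ∨ invCount n w + 1 = invCount n (w * g) := by
  have hwg : w * g ∈ W n := (W n).mul_mem hw (mem_W_of_mem_gens hn hg)
  have hwgg : w * g * g = w := by rw [mul_assoc, mul_self_of_mem_gens hg, mul_one]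
  rcases hg with rfl | ⟨i, hi, hin, rfl⟩
  · have hwt1 : (w * t) 1 = -w 1 := by
      rw [Equiv.Perm.mul_apply, t_apply_one, W.apply_neg hw]
    rcases lt_or_gt_of_ne ((W.apply_eq_zero_iff hw).not.2 one_ne_zero) with h | h
    · exact .inl (invCount_mul_t_add_one hw h)
    · have := invCount_mul_t_add_one hwg (by omega)
      rw [hwgg] at this
      exact .inr this
  · have hne : w i ≠ w (i + 1) := fun h => by have := w.injective h; omega
    rcases lt_or_gt_of_ne hne with h | h
    · have := invCount_mul_s_add_one hi hin hwg
        (by simpa only [Equiv.Perm.mul_apply, s_apply_self hi, s_apply_add_one hi] using h)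
      rw [hwgg] at this
      exact .inr this
    · exact .inl (invCount_mul_s_add_one hi hin hw h)

lemma invCount_list_prod_le {n : ℕ} (hn : 1 ≤ n) {L : List (Equiv.Perm ℤ)}
    (hL : ∀ g ∈ L, g ∈ gens n) : invCount n L.prod ≤ L.length := by
  induction L using List.reverseRecOn with
  | nil => simp [invCount_one]
  | append_singleton L g ih =>
    simp only [List.mem_append, List.mem_singleton] at hL
    have hLW : L.prod ∈ W n :=
      (W n).list_prod_mem fun x hx => mem_W_of_mem_gens hn (hL x (.inl hx))
    rw [List.prod_append, List.prod_singleton, List.length_append, List.length_singleton]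
    have := invCount_mul_gens hn hLW (hL g (.inr rfl))
    have := ih fun x hx => hL x (.inl hx)
    omega

lemma W.eq_one_of_forall_ascent {n : ℕ} {w : Equiv.Perm ℤ} (hw : w ∈ W n) (h1 : 0 < w 1)
    (hasc : ∀ i : ℕ, 1 ≤ i → i < n → w i < w (i + 1)) : w = 1 := by
  -- `1 ≤ w 1 < w 2 < ⋯ < w n ≤ n` forces `w k = k`
  have hge : ∀ k : ℕ, 1 ≤ k → k ≤ n → (k : ℤ) ≤ w k := by
    intro k hk
    induction k, hk using Nat.le_induction with
    | base => intro; exact_mod_cast h1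
    | succ k hk ih =>
      intro hkn
      have := hasc k hk (by omega)
      push_cast
      have := ih (by omega)
      omega
  have hle : ∀ j k : ℕ, k + j = n → 1 ≤ k → w k ≤ k := by
    intro j
    induction j with
    | zero =>
      intro k hkn _
      have := W.abs_apply_le hw (x := k) (by rw [Nat.abs_cast]; exact_mod_cast hkn.le)
      rw [abs_le] at this
      omega
    | succ j ih =>
      intro k hkn hk
      have := hasc k hk (by omega)
      have := ih (k + 1) (by omega) (by omega)
      push_cast at this
      omega
  refine W.eq_one_of_forall_apply_eq hw fun k hk hkn => ?_
  have := hge k hk hkn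
  have := hle (n - k) k (by omega) hk
  omega

lemma exists_mem_gens_invCount_mul_add_one {n : ℕ} {w : Equiv.Perm ℤ} (hw : w ∈ W n)
    (hw1 : w ≠ 1) : ∃ g ∈ gens n, invCount n (w * g) + 1 = invCount n w := by
  by_contra! hdesc
  refine hw1 (W.eq_one_of_forall_ascent hw ?_ fun i hi hin => ?_)
  · have h1 := (W.apply_eq_zero_iff hw (x := 1)).not.2 one_ne_zero
    by_contra! h
    exact hdesc t (.inl rfl) (invCount_mul_t_add_one hw (by omega))
  · have hne : w i ≠ w (i + 1) := fun h => by have := w.injective h; omega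
    by_contra! h
    exact hdesc (s i) (.inr ⟨i, hi, hin, rfl⟩) (invCount_mul_s_add_one hi hin hw (by omega))

lemma exists_list_prod_eq_length_eq_invCount {n : ℕ} (hn : 1 ≤ n) {w : Equiv.Perm ℤ}
    (hw : w ∈ W n) :
    ∃ L : List (Equiv.Perm ℤ), (∀ g ∈ L, g ∈ gens n) ∧ L.prod = w ∧ L.length = invCount n w := by
  induction h : invCount n w using Nat.strong_induction_on generalizing w with
  | _ N ih =>
    by_cases hw1 : w = 1
    · exact ⟨[], by simp, by simp [hw1], by simp [← h, hw1, invCount_one]⟩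
    obtain ⟨g, hg, hdesc⟩ := exists_mem_gens_invCount_mul_add_one hw hw1
    obtain ⟨L, hL, hprod, hlen⟩ :=
      ih _ (by omega) ((W n).mul_mem hw (mem_W_of_mem_gens hn hg)) rfl
    refine ⟨L ++ [g], ?_, ?_, ?_⟩
    · simp only [List.mem_append, List.mem_singleton]
      rintro x (hx | rfl)
      exacts [hL x hx, hg]
    · rw [List.prod_append, List.prod_singleton, hprod, mul_assoc, mul_self_of_mem_gens hg,
        mul_one]
    · rw [List.length_append, List.length_singleton, hlen]
      omega

theorem len_eq_invCount {n : ℕ} (hn : 1 ≤ n) {w : Equiv.Perm ℤ} (hw : w ∈ W n) :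
    len n w = invCount n w := by
  obtain ⟨L, hL, hprod, hlen⟩ := exists_list_prod_eq_length_eq_invCount hn hw
  refine le_antisymm (hlen ▸ Nat.sInf_le ⟨L, hL, hprod, rfl⟩) ?_
  obtain ⟨L', hL', hprod', hlen'⟩ := Nat.sInf_mem (s := {k | ∃ L : List (Equiv.Perm ℤ),
    (∀ x ∈ L, x ∈ gens n) ∧ L.prod = w ∧ L.length = k}) ⟨_, L, hL, hprod, rfl⟩
  calc invCount n w = invCount n L'.prod := by rw [hprod']
    _ ≤ L'.length := invCount_list_prod_le hn hL'
    _ = len n w := hlen'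

theorem len_lt_len_t_mul_iff {n : ℕ} (hn : 1 ≤ n) {w : Equiv.Perm ℤ} (hw : w ∈ W n) :
    len n w < len n (t * w) ↔ 0 < w⁻¹ 1 := by
  have htw : t * w ∈ W n := (W n).mul_mem (t_mem_W hn) hw
  rw [len_eq_invCount hn hw, len_eq_invCount hn htw]
  rcases lt_or_gt_of_ne ((W.apply_eq_zero_iff ((W n).inv_mem hw) (x := 1)).not.2 one_ne_zero)
    with h | h
  · have := invCount_t_mul_add_one hw h
    omega
  · have htw1 : (t * w)⁻¹ 1 = -w⁻¹ 1 := by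
      rw [mul_inv_rev, Equiv.Perm.mul_apply, t, Equiv.swap_inv, ← t, t_apply_one,
        W.apply_neg ((W n).inv_mem hw)]
    have := invCount_t_mul_add_one htw (by omega)
    rw [← mul_assoc, t_mul_self, one_mul] at this
    omega

lemma r_succ {i : ℕ} (hi : 1 ≤ i) : r (i + 1) = s i * r i := by
  obtain ⟨k, rfl⟩ := Nat.exists_eq_add_of_le' hi
  rfl

lemma r_apply {i : ℕ} (hi : 1 ≤ i) (x : ℤ) :
    r i x = if x = 1 then -(i : ℤ) else if 2 ≤ x ∧ x ≤ i then x - 1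
      else if x = -1 then (i : ℤ) else if -(i : ℤ) ≤ x ∧ x ≤ -2 then x + 1 else x := by
  induction i, hi using Nat.le_induction generalizing x with
  | base =>
    rw [show r 1 = t from rfl, t_apply]
    split_ifs <;> omega
  | succ k hk ih =>
    rw [r_succ hk, Equiv.Perm.mul_apply, ih, s_apply hk]
    push_cast
    split_ifs <;> omega

lemma a_apply (l : ℕ) (x : ℤ) :
    a l x = if 1 ≤ x ∧ x ≤ l then x - (l + 1) else if -(l : ℤ) ≤ x ∧ x ≤ -1 then x + (l + 1)
      else x := by
  induction l generalizing x with
  | zero =>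
    rw [show a 0 = 1 from rfl, Equiv.Perm.one_apply]
    split_ifs <;> omega
  | succ k ih =>
    rw [show a (k + 1) = a k * r (k + 1) from rfl, Equiv.Perm.mul_apply, r_apply (by omega), ih]
    push_cast
    split_ifs <;> omega

lemma sigmaI_apply (i j : ℕ) (x : ℤ) :
    sigmaI i j x = if 1 ≤ (i : ℤ) ∧ i ≤ x ∧ x ≤ j then i + j - x
      else if 1 ≤ (i : ℤ) ∧ -(j : ℤ) ≤ x ∧ x ≤ -i then -((i : ℤ) + j) - x else x :=
  rfl

lemma a_mem_W {n l : ℕ} (hl : l ≤ n) : a l ∈ W n := by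
  refine ⟨fun x => ?_, fun x hx => ?_⟩
  · simp only [a_apply]
    split_ifs <;> omega
  · rw [lt_abs] at hx
    rw [a_apply]
    split_ifs <;> omega

lemma sigmaI_mem_W {n i j : ℕ} (hj : j ≤ n) : sigmaI i j ∈ W n := by
  refine ⟨fun x => ?_, fun x hx => ?_⟩
  · simp only [sigmaI_apply]
    split_ifs <;> omega
  · rw [lt_abs] at hx
    rw [sigmaI_apply]
    split_ifs <;> omega

lemma cElt_mem_W {n : ℕ} {K : Finset ℕ} (hK : ∀ i ∈ K, 1 ≤ i ∧ i < n) : cElt K ∈ W n :=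
  (W n).list_prod_mem fun x hx => by
    obtain ⟨i, hi, rfl⟩ := List.mem_map.1 hx
    rw [mem_sort] at hi
    exact s_mem_W (hK i hi).1 (hK i hi).2

lemma list_prod_map_s_apply_of_lt {L : List ℕ} {x : ℕ} (hL : ∀ i ∈ L, x < i) :
    (L.map s).prod x = x := by
  induction L with
  | nil => rfl
  | cons j L ih =>
    simp only [List.mem_cons, forall_eq_or_imp] at hL
    rw [List.map_cons, List.prod_cons, Equiv.Perm.mul_apply, ih hL.2, s_apply (by omega)]
    split_ifs <;> omega

/-- `s_b s_{b+1} ⋯ s_{e-1}` carries `e` down to `b`; the other factors do not move the chain. -/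
lemma list_prod_map_s_apply_of_gap {L : List ℕ} (hL : L.Pairwise (· < ·)) {b e : ℕ} (hb : 1 ≤ b)
    (hbe : b ≤ e) (hLb : ∀ i ∈ L, b ≤ i) (hgap : ∀ i, b ≤ i → i < e → i ∈ L) (he : e ∉ L) :
    (L.map s).prod e = b := by
  induction L generalizing b with
  | nil =>
    obtain rfl : b = e := by by_contra h; exact List.not_mem_nil (hgap b le_rfl (by omega))
    rfl
  | cons j L ih =>
    rw [List.pairwise_cons] at hL
    simp only [List.mem_cons, forall_eq_or_imp] at hLb hgap he
    rcases hbe.eq_or_lt with rfl | hbe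
    · refine list_prod_map_s_apply_of_lt fun i hi => ?_
      simp only [List.mem_cons] at hi
      rcases hi with rfl | hi
      · exact lt_of_le_of_ne hLb.1 (not_or.1 he).1
      · exact lt_of_le_of_lt hLb.1 (hL.1 i hi)
    have hjb : j = b := by
      rcases hgap b le_rfl hbe with h | h
      · exact h.symm
      · exact absurd (hL.1 b h) (by omega)
    subst hjb
    have htail : (L.map s).prod e = ((j + 1 : ℕ) : ℤ) := by
      refine ih hL.2 (by omega) hbe (fun i hi => hL.1 i hi) (fun i hi hie => ?_) (not_or.1 he).2
      exact (hgap i (by omega) hie).resolve_left (by omega)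
    rw [List.map_cons, List.prod_cons, Equiv.Perm.mul_apply, htail, s_apply hb]
    push_cast
    split_ifs <;> omega

lemma cElt_apply_of_lt {K : Finset ℕ} {x : ℕ} (hK : ∀ i ∈ K, x < i) : cElt K x = x :=
  list_prod_map_s_apply_of_lt fun i hi => hK i ((mem_sort _).1 hi)

lemma cElt_apply_of_gap {K : Finset ℕ} {b e : ℕ} (hb : 1 ≤ b) (hbe : b ≤ e)
    (hKb : ∀ i ∈ K, b ≤ i) (hgap : ∀ i, b ≤ i → i < e → i ∈ K) (he : e ∉ K) : cElt K e = b :=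
  list_prod_map_s_apply_of_gap (sortedLT_sort K).pairwise hb hbe
    (fun i hi => hKb i ((mem_sort _).1 hi)) (fun i hbi hie => (mem_sort _).2 (hgap i hbi hie))
    (fun h => he ((mem_sort _).1 h))

lemma exists_first_gap (K : Finset ℕ) (b : ℕ) :
    ∃ e, b ≤ e ∧ e ∉ K ∧ ∀ i, b ≤ i → i < e → i ∈ K := by
  have hex : ∃ e, b ≤ e ∧ e ∉ K := by
    obtain ⟨e, he⟩ := Infinite.exists_notMem_finset (K ∪ range b)
    simp only [mem_union, mem_range, not_or, not_lt] at he
    exact ⟨e, he.2, he.1⟩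
  classical
  refine ⟨Nat.find hex, (Nat.find_spec hex).1, (Nat.find_spec hex).2, fun i hbi hi => ?_⟩
  by_contra hiK
  exact Nat.find_min hex hi ⟨hbi, hiK⟩

def alpha (n l : ℕ) (I : Finset ℕ) : Equiv.Perm ℤ :=
  cElt (I ∩ Icc 1 (l - 1)) * cElt (Icc l (n - 1) \ I) * sigmaI l n * a l

section Alpha

variable {n l : ℕ} {I : Finset ℕ}

lemma alpha_apply (x : ℤ) :
    alpha n l I x = cElt (I ∩ Icc 1 (l - 1)) (cElt (Icc l (n - 1) \ I) (sigmaI l n (a l x))) :=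
  rfl

lemma alpha_mem_W (hl1 : 1 ≤ l) (hln : l ≤ n) : alpha n l I ∈ W n := by
  refine (W n).mul_mem ((W n).mul_mem ((W n).mul_mem (cElt_mem_W fun i hi => ?_)
    (cElt_mem_W fun i hi => ?_)) (sigmaI_mem_W le_rfl)) (a_mem_W hln)
  · have := mem_Icc.1 (mem_inter.1 hi).2
    omega
  · have := mem_Icc.1 (mem_sdiff.1 hi).1
    omega

lemma alpha_inv_one_neg_of_not_subset (hl1 : 1 ≤ l) (h : ¬Icc 1 (l - 1) ⊆ I) :
    (alpha n l I)⁻¹ 1 < 0 := by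
  obtain ⟨e₀, he₀, he₀I⟩ := not_subset.1 h
  rw [mem_Icc] at he₀
  obtain ⟨e, he1, heI, hgap⟩ := exists_first_gap I 1
  have hee₀ : e ≤ e₀ := by
    by_contra! h
    exact he₀I (hgap e₀ he₀.1 h)
  have ha : a l ((e : ℤ) - (l + 1)) = e := by
    rw [a_apply]
    split_ifs <;> omega
  have hσ : sigmaI l n e = e := by
    rw [sigmaI_apply]
    split_ifs <;> omega
  have hc₂ : cElt (Icc l (n - 1) \ I) e = e := cElt_apply_of_lt fun i hi => by
    have := mem_Icc.1 (mem_sdiff.1 hi).1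
    omega
  have hc₁ : cElt (I ∩ Icc 1 (l - 1)) e = (1 : ℕ) :=
    cElt_apply_of_gap le_rfl he1 (fun i hi => (mem_Icc.1 (mem_inter.1 hi).2).1)
      (fun i hi hie => mem_inter.2 ⟨hgap i hi hie, mem_Icc.2 ⟨hi, by omega⟩⟩)
      (fun h => heI (mem_inter.1 h).1)
  have : (alpha n l I)⁻¹ 1 = (e : ℤ) - (l + 1) := by
    rw [Equiv.Perm.inv_eq_iff_eq, alpha_apply, ha, hσ, hc₂, hc₁, Nat.cast_one]
  omega

lemma cElt_inter_Icc_apply (hl1 : 1 ≤ l) (hsub : Icc 1 (l - 1) ⊆ I) :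
    cElt (I ∩ Icc 1 (l - 1)) l = (1 : ℕ) :=
  cElt_apply_of_gap le_rfl hl1 (fun i hi => (mem_Icc.1 (mem_inter.1 hi).2).1)
    (fun i hi hil => mem_inter.2 ⟨hsub (mem_Icc.2 ⟨hi, by omega⟩), mem_Icc.2 ⟨hi, by omega⟩⟩)
    (fun h => by have := mem_Icc.1 (mem_inter.1 h).2; omega)

lemma alpha_Icc_inv_one (hl1 : 1 ≤ l) (hln : l ≤ n) : (alpha n l (Icc 1 (l - 1)))⁻¹ 1 = -1 := by
  have ha : a l (-1) = l := by
    rw [a_apply]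
    split_ifs <;> omega
  have hσ : sigmaI l n l = n := by
    rw [sigmaI_apply]
    split_ifs <;> omega
  have hc₂ : cElt (Icc l (n - 1) \ Icc 1 (l - 1)) n = l :=
    cElt_apply_of_gap hl1 hln (fun i hi => (mem_Icc.1 (mem_sdiff.1 hi).1).1)
      (fun i hi hin => mem_sdiff.2 ⟨mem_Icc.2 ⟨hi, by omega⟩, fun h => by
        have := mem_Icc.1 h
        omega⟩)
      (fun h => by have := mem_Icc.1 (mem_sdiff.1 h).1; omega)
  rw [Equiv.Perm.inv_eq_iff_eq, alpha_apply, ha, hσ, hc₂, cElt_inter_Icc_apply hl1 subset_rfl,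
    Nat.cast_one]

lemma alpha_inv_one_pos (hl1 : 1 ≤ l) (hsub : Icc 1 (l - 1) ⊆ I) {j : ℕ} (hj : j ∈ I)
    (hlj : l ≤ j) (hjn : j < n) : 0 < (alpha n l I)⁻¹ 1 := by
  obtain ⟨e, hle, heK, hgap⟩ := exists_first_gap (Icc l (n - 1) \ I) l
  have hej : e ≤ j := by
    by_contra! h
    exact (mem_sdiff.1 (hgap j hlj h)).2 hj
  have ha : a l ((l : ℤ) + n - e) = (l : ℤ) + n - e := by
    rw [a_apply]
    split_ifs <;> omega
  have hσ : sigmaI l n ((l : ℤ) + n - e) = e := by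
    rw [sigmaI_apply]
    split_ifs <;> omega
  have hc₂ : cElt (Icc l (n - 1) \ I) e = l :=
    cElt_apply_of_gap hl1 hle (fun i hi => (mem_Icc.1 (mem_sdiff.1 hi).1).1) hgap heK
  have : (alpha n l I)⁻¹ 1 = (l : ℤ) + n - e := by
    rw [Equiv.Perm.inv_eq_iff_eq, alpha_apply, ha, hσ, hc₂, cElt_inter_Icc_apply hl1 hsub,
      Nat.cast_one]
  omega

theorem zero_lt_alpha_inv_one_iff (hl1 : 1 ≤ l) (hln : l + 1 ≤ n) (hI : I ⊆ Icc 1 (n - 1)) :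
    0 < (alpha n l I)⁻¹ 1 ↔ Icc 1 (l - 1) ⊂ I := by
  by_cases hsub : Icc 1 (l - 1) ⊆ I
  · by_cases hex : ∃ j ∈ I, l ≤ j
    · obtain ⟨j, hj, hlj⟩ := hex
      have hjn : j < n := by
        have := mem_Icc.1 (hI hj)
        omega
      refine iff_of_true (alpha_inv_one_pos hl1 hsub hj hlj hjn)
        ((ssubset_iff_of_subset hsub).2 ⟨j, hj, fun h => ?_⟩)
      have := mem_Icc.1 h
      omega
    · simp only [not_exists, not_and, not_le] at hex
      obtain rfl : I = Icc 1 (l - 1) := Subset.antisymm (fun j hj => mem_Icc.2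
        ⟨(mem_Icc.1 (hI hj)).1, by have := hex j hj; omega⟩) hsub
      rw [alpha_Icc_inv_one hl1 (by omega)]
      exact iff_of_false (by omega) (lt_irrefl _)
  · have := alpha_inv_one_neg_of_not_subset (n := n) hl1 hsub
    exact iff_of_false (by omega) fun h => hsub h.subset

end Alpha

/-- for `1 ≤ l ≤ n-1` and `I ⊆ [1,n-1]`, setting
`α(I) = c_{I ∩ [1,l-1]} c_{[l,n-1] ∖ I} σ_{[l,n]} a_l`, one has
`ℓ(t α(I)) > ℓ(α(I))` iff `[1,l-1] ⊊ I`, equivalently `α(I)⁻¹(1) > 0` iff `[1,l-1] ⊊ I`. -/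
theorem stmt12 (n l : ℕ) (hl1 : 1 ≤ l) (hl2 : l + 1 ≤ n)
    (I : Finset ℕ) (hI : I ⊆ Finset.Icc 1 (n - 1))
    (αI : Equiv.Perm ℤ)
    (hα : αI = cElt (I ∩ Finset.Icc 1 (l - 1)) * cElt (Finset.Icc l (n - 1) \ I) *
      sigmaI l n * a l) :
    (len n αI < len n (t * αI) ↔ Finset.Icc 1 (l - 1) ⊂ I) ∧
    (0 < αI⁻¹ (1 : ℤ) ↔ Finset.Icc 1 (l - 1) ⊂ I) := by
  obtain rfl : αI = alpha n l I := hα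
  have hpos := zero_lt_alpha_inv_one_iff hl1 hl2 hI
  exact ⟨(len_lt_len_t_mul_iff (by omega) (alpha_mem_W hl1 (by omega))).trans hpos, hpos⟩

end TypeB
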